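/- Define ν on morphisms of D_m by: ν(α,x̄) = 1 if α = x, ν(α,x̄) = −1 if α = x+1, and ν(α,x̄) = 0 if α ≥ x+2 (where x ∈ {0,…,m−1} is the representative of x̄). Then ν is the two-sided convolution inverse of the zeta function of D_m: for every morphism f of D_m, the sum of ν(g) over all pairs of composable morphisms (g,h) with g·h = f equals 1 if f is an identity morphism and 0 otherwise, and likewise the sum of ν(h) over all such pairs (g,h) with g·h = f equals 1 if f is an identity morphism and 0 otherwise. -/
import Mathlib


/-- A (potential) morphism `(α, x̄)` of the category `D_m`: it goes from the
object `x̄` to the object `ᾱ` (the unique `ȳ` with `α ≡ y (mod m)`). -/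
structure DmMor (m : ℕ) where
  a : ℤ
  x : ZMod m
deriving DecidableEq

/-- `(α, x̄)` really is a morphism of `D_m`: `α ≥ x`, where `x ∈ {0,…,m-1}` is
the canonical representative of `x̄`. -/
def DmValid (m : ℕ) (f : DmMor m) : Prop := (f.x.val : ℤ) ≤ f.a

/-- The target object of a morphism `(α, x̄)` of `D_m`: the residue class of `α`. -/
def DmTgt (m : ℕ) (f : DmMor m) : ZMod m := (f.a : ZMod m)

/-- `g` may be composed after `f` (target of `f` = source of `g`). -/
def DmComposable (m : ℕ) (f g : DmMor m) : Prop := g.x = (f.a : ZMod m)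

/-- The composite `g ∘ f` in `D_m`: `(β, ȳ) ∘ (α, x̄) = (β - y + α, x̄)`, where
`y ∈ {0,…,m-1}` is the canonical representative of `ȳ`. -/
def DmComp (m : ℕ) (g f : DmMor m) : DmMor m :=
  ⟨g.a - (g.x.val : ℤ) + f.a, f.x⟩

/-- The identity morphism `(x, x̄)` of the object `x̄` of `D_m`, where
`x ∈ {0,…,m-1}` is the canonical representative of `x̄`. -/
def DmId (m : ℕ) (x : ZMod m) : DmMor m := ⟨(x.val : ℤ), x⟩

/-- The proposed Möbius function of the category `D_m`: `ν(α, x̄) = 1` if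
`α = x`, `-1` if `α = x + 1`, and `0` otherwise (in particular for `α ≥ x + 2`),
where `x ∈ {0,…,m-1}` is the canonical representative of `x̄`. -/
def nuD (m : ℕ) (f : DmMor m) : ℤ :=
  if f.a = (f.x.val : ℤ) then 1
  else if f.a = (f.x.val : ℤ) + 1 then -1
  else 0

/-- `ν` is the two-sided convolution inverse of the zeta function of `D_m`:
for every morphism `f` of `D_m`, summing `ν(g)` (resp. `ν(h)`) over the
(finitely many) pairs of composable morphisms `(g, h)` with `g ∘ h = f` gives
`1` if `f` is an identity morphism and `0` otherwise. -/
theorem stmt14 (m : ℕ) (hm : 1 < m) (f : DmMor m) (hf : DmValid m f)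
    (S : Set (DmMor m × DmMor m))
    (hS : S = {p | DmValid m p.1 ∧ DmValid m p.2 ∧
      DmComposable m p.2 p.1 ∧ DmComp m p.1 p.2 = f})
    (hfin : S.Finite) :
    (∑ p ∈ hfin.toFinset, nuD m p.1) =
      (if f = DmId m f.x then 1 else 0) ∧
    (∑ p ∈ hfin.toFinset, nuD m p.2) =
      (if f = DmId m f.x then 1 else 0) := by

  obtain ⟨fa, fx⟩ := f
  have hid : ((⟨fa, fx⟩ : DmMor m) = DmId m fx) ↔ fa = (fx.val : ℤ) := by
    simp [DmId]
  have hΦ : hfin.toFinset = (Finset.Icc ((fx.val : ℤ)) fa).image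
      (fun β : ℤ => ((⟨fa - β + (((β : ZMod m).val : ℤ)), (β : ZMod m)⟩ : DmMor m),
                 (⟨β, fx⟩ : DmMor m))) := by
    ext p
    obtain ⟨⟨a1, x1⟩, ⟨a2, x2⟩⟩ := p
    simp only [Set.Finite.mem_toFinset, hS, Set.mem_setOf_eq, Finset.mem_image,
      Finset.mem_Icc, DmValid, DmComposable, DmComp, DmMor.mk.injEq, Prod.mk.injEq]
    constructor
    · rintro ⟨h1, h2, h3, h4, h5⟩
      subst h5; subst h3
      exact ⟨a2, ⟨h2, by omega⟩, ⟨by omega, rfl⟩, rfl, rfl⟩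
    · rintro ⟨β, ⟨hb1, hb2⟩, ⟨ha1, ha2⟩, hb, hx2⟩
      subst hb; subst hx2; subst ha2; subst ha1
      exact ⟨by omega, hb1, rfl, by omega, rfl⟩
  have hinj : ∀ β₁ ∈ Finset.Icc ((fx.val : ℤ)) fa, ∀ β₂ ∈ Finset.Icc ((fx.val : ℤ)) fa,
      (fun β : ℤ => ((⟨fa - β + (((β : ZMod m).val : ℤ)), (β : ZMod m)⟩ : DmMor m),
                 (⟨β, fx⟩ : DmMor m))) β₁ =
      (fun β : ℤ => ((⟨fa - β + (((β : ZMod m).val : ℤ)), (β : ZMod m)⟩ : DmMor m),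
                 (⟨β, fx⟩ : DmMor m))) β₂ → β₁ = β₂ := by
    intro a _ b _ h
    simpa using congrArg (fun p => p.2.a) h
  rw [hΦ, Finset.sum_image hinj, Finset.sum_image hinj]
  have hf' : (fx.val : ℤ) ≤ fa := hf
  constructor
  · have key : ∀ β ∈ Finset.Icc ((fx.val : ℤ)) fa,
        nuD m (⟨fa - β + (((β : ZMod m).val : ℤ)), (β : ZMod m)⟩ : DmMor m) =
        (if β = fa then 1 else 0) + (if β = fa - 1 then (-1 : ℤ) else 0) := by
      intro β _
      simp only [nuD]
      split_ifs <;> omega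
    rw [Finset.sum_congr rfl key, Finset.sum_add_distrib,
      Finset.sum_ite_eq' _ fa, Finset.sum_ite_eq' _ (fa - 1), if_congr hid rfl rfl]
    simp only [Finset.mem_Icc]
    split_ifs <;> omega
  · have key : ∀ β ∈ Finset.Icc ((fx.val : ℤ)) fa,
        nuD m (⟨β, fx⟩ : DmMor m) =
        (if β = (fx.val : ℤ) then 1 else 0) +
        (if β = (fx.val : ℤ) + 1 then (-1 : ℤ) else 0) := by
      intro β _
      simp only [nuD]
      split_ifs <;> omega
    rw [Finset.sum_congr rfl key, Finset.sum_add_distrib,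
      Finset.sum_ite_eq' _ ((fx.val : ℤ)), Finset.sum_ite_eq' _ ((fx.val : ℤ) + 1),
      if_congr hid rfl rfl]
    simp only [Finset.mem_Icc]
    split_ifs <;> omega
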